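/- arXiv:2305.02495 — 4 statements merged into one kernel-verified Lean document; each statement's English description precedes it below -/
import Mathlib

section
/- Let m ≥ 1 be an integer and let g be a holomorphic function on the open unit disk 𝔻 with |g(t)| < 1 for all t ∈ 𝔻, whose Taylor expansion at 0 has the form g(t) = c_m t^m + c_{m+1} t^{m+1} + ⋯ (i.e., g vanishes at 0 to order at least m, and c_m is its m-th Taylor coefficient). Then for every t ∈ 𝔻 one has |g(t)| ≤ |t|^m · (|t| + |c_m|)/(1 + |c_m|·|t|). -/
/-!
Since `|t^m h(t)| < 1` on circles `|t| = r`, the maximum modulus principle gives `|h| ≤ r^{-m}`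
inside them, and letting `r → 1` shows that `h` maps the disk into the closed disk.
If `|h 0| = 1` the bound is just `|h| ≤ 1`. Otherwise `h` maps the disk into the open disk, and
composing it with the disk automorphism `φ_a(w) = (a - w)/(1 - ā w)`, `a = h 0`, gives a self-map
of the disk fixing `0`. By Schwarz's lemma `|φ_a(h t)| ≤ |t|`, and this pseudo-hyperbolic estimate
inverts to `|h t| ≤ (|t| + |a|)/(1 + |a||t|)`.
-/

open Metric Set ComplexConjugate

namespace Complex

noncomputable def blaschkeFactor (a w : ℂ) : ℂ := (a - w) / (1 - conj a * w)

theorem blaschkeFactor_self (a : ℂ) : blaschkeFactor a a = 0 := by simp [blaschkeFactor]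

theorem sq_norm_one_sub_conj_mul_sub_sq_norm_sub (a w : ℂ) :
    ‖1 - conj a * w‖ ^ 2 - ‖a - w‖ ^ 2 = (1 - ‖a‖ ^ 2) * (1 - ‖w‖ ^ 2) := by
  simp only [Complex.sq_norm, normSq_apply, sub_re, sub_im, mul_re, mul_im, one_re, one_im,
    conj_re, conj_im]
  ring

theorem one_sub_conj_mul_ne_zero {a w : ℂ} (ha : ‖a‖ < 1) (hw : ‖w‖ ≤ 1) :
    1 - conj a * w ≠ 0 := by
  have : ‖conj a * w‖ < 1 := by
    rw [norm_mul, norm_conj]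
    nlinarith [norm_nonneg a, norm_nonneg w]
  intro h
  rw [← sub_eq_zero.1 h, norm_one] at this
  exact lt_irrefl _ this

theorem norm_blaschkeFactor_lt_one {a w : ℂ} (ha : ‖a‖ < 1) (hw : ‖w‖ < 1) :
    ‖blaschkeFactor a w‖ < 1 := by
  have hden := norm_pos_iff.2 (one_sub_conj_mul_ne_zero ha hw.le)
  rw [blaschkeFactor, norm_div, div_lt_one hden, ← sq_lt_sq₀ (norm_nonneg _) hden.le,
    ← sub_pos, sq_norm_one_sub_conj_mul_sub_sq_norm_sub]
  have ha2 : ‖a‖ ^ 2 < 1 := by nlinarith [norm_nonneg a]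
  have hw2 : ‖w‖ ^ 2 < 1 := by nlinarith [norm_nonneg w]
  exact mul_pos (sub_pos.2 ha2) (sub_pos.2 hw2)

theorem norm_le_of_norm_blaschkeFactor_le {a w : ℂ} {r : ℝ} (ha : ‖a‖ < 1) (hw : ‖w‖ < 1)
    (h : ‖blaschkeFactor a w‖ ≤ r) : ‖w‖ ≤ (r + ‖a‖) / (1 + ‖a‖ * r) := by
  have hden := one_sub_conj_mul_ne_zero ha hw.le
  rw [blaschkeFactor, norm_div, div_le_iff₀ (norm_pos_iff.2 hden)] at h
  have hid := sq_norm_one_sub_conj_mul_sub_sq_norm_sub a w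
  have hD : 1 - ‖a‖ * ‖w‖ ≤ ‖1 - conj a * w‖ := by
    simpa [norm_conj] using norm_sub_norm_le (1 : ℂ) (conj a * w)
  set A := ‖a‖
  set x := ‖w‖
  set D := ‖1 - conj a * w‖
  have hA := norm_nonneg a
  have hx := norm_nonneg w
  have hN := norm_nonneg (a - w)
  have hAx : 0 < 1 - A * x := by nlinarith
  have hr : 0 ≤ r := by nlinarith
  rw [le_div_iff₀ (by positivity)]
  rcases le_total r 1 with hr1 | hr1
  · -- `(1 - A x)² - (x - A)² = (1 - A²)(1 - x²) = D² - ‖a - w‖²`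
    have hsq : (x - A) ^ 2 ≤ (r * (1 - A * x)) ^ 2 := by
      have hD2 : (1 - A * x) ^ 2 ≤ D ^ 2 := pow_le_pow_left₀ hAx.le hD 2
      have hN2 : ‖a - w‖ ^ 2 ≤ (r * D) ^ 2 := pow_le_pow_left₀ hN h 2
      have hr2 : 0 ≤ 1 - r ^ 2 := by nlinarith
      nlinarith [mul_le_mul_of_nonneg_left hD2 hr2]
    nlinarith [abs_le_of_sq_le_sq' hsq (by positivity)]
  · nlinarith

section MaximumModulus

variable {E F : Type*} [NormedAddCommGroup E] [NormedSpace ℂ E] [NormedAddCommGroup F]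
  [NormedSpace ℂ F]

theorem mapsTo_ball_of_mapsTo_closedBall {f : E → F} {U : Set E} {c : E} {R : ℝ}
    (hU : IsPreconnected U) (hUo : IsOpen U) (hf : DifferentiableOn ℂ f U)
    (hmaps : MapsTo f U (closedBall 0 R)) (hc : c ∈ U) (hfc : ‖f c‖ < R) :
    MapsTo f U (ball 0 R) := by
  intro z hz
  rw [mem_ball_zero_iff]
  refine (mem_closedBall_zero_iff.1 (hmaps hz)).lt_of_ne fun hfz => hfc.ne ?_
  have hmax : IsMaxOn (norm ∘ f) U z := fun w hw => by
    simpa [hfz] using mem_closedBall_zero_iff.1 (hmaps hw)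
  simpa [hfz] using norm_eqOn_of_isPreconnected_of_isMaxOn hU hUo hf hz hmax hc

theorem norm_le_div_pow_of_forall_mem_sphere_norm_pow_smul_le {h : ℂ → F} {m : ℕ} {r M : ℝ}
    (hr : 0 < r) (hh : DifferentiableOn ℂ h (closedBall 0 r))
    (hbound : ∀ t ∈ sphere (0 : ℂ) r, ‖t ^ m • h t‖ ≤ M) {z : ℂ} (hz : z ∈ closedBall 0 r) :
    ‖h z‖ ≤ M / r ^ m := by
  have hcl : closure (ball (0 : ℂ) r) = closedBall 0 r := closure_ball 0 hr.ne'
  refine norm_le_of_forall_mem_frontier_norm_le isBounded_ball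
    (DifferentiableOn.diffContOnCl (hcl ▸ hh)) (fun w hw => ?_) (hcl ▸ hz)
  rw [frontier_ball 0 hr.ne'] at hw
  have hbw := hbound w hw
  rw [norm_smul, norm_pow, mem_sphere_zero_iff_norm.1 hw] at hbw
  rw [le_div_iff₀ (by positivity)]
  linarith

theorem norm_le_of_forall_norm_pow_smul_le {h : ℂ → F} {m : ℕ} {M : ℝ}
    (hh : DifferentiableOn ℂ h (ball 0 1)) (hbound : ∀ t ∈ ball (0 : ℂ) 1, ‖t ^ m • h t‖ ≤ M)
    {z : ℂ} (hz : z ∈ ball 0 1) : ‖h z‖ ≤ M := by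
  rw [mem_ball_zero_iff] at hz
  have hlim : Filter.Tendsto (fun r : ℝ => M / r ^ m) (nhdsWithin 1 (Iio 1)) (nhds M) := by
    have hcont : ContinuousAt (fun r : ℝ => M / r ^ m) 1 :=
      continuousAt_const.div (continuousAt_pow 1 m) (by norm_num)
    simpa using hcont.tendsto.mono_left nhdsWithin_le_nhds
  refine ge_of_tendsto hlim ?_
  filter_upwards [Ioo_mem_nhdsLT_of_mem ⟨hz, le_rfl⟩] with r ⟨hzr, hr1⟩
  have hr0 : 0 < r := (norm_nonneg z).trans_lt hzr
  have hsub : closedBall (0 : ℂ) r ⊆ ball 0 1 := closedBall_subset_ball hr1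
  exact norm_le_div_pow_of_forall_mem_sphere_norm_pow_smul_le hr0 (hh.mono hsub)
    (fun t ht => hbound t (hsub (sphere_subset_closedBall ht))) (mem_closedBall_zero_iff.2 hzr.le)

end MaximumModulus

theorem norm_le_of_mapsTo_closedBall {h : ℂ → ℂ} (hh : DifferentiableOn ℂ h (ball 0 1))
    (hmaps : MapsTo h (ball 0 1) (closedBall 0 1)) {t : ℂ} (ht : t ∈ ball (0 : ℂ) 1) :
    ‖h t‖ ≤ (‖t‖ + ‖h 0‖) / (1 + ‖h 0‖ * ‖t‖) := by
  have h0 : (0 : ℂ) ∈ ball (0 : ℂ) 1 := mem_ball_self one_pos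
  rcases (mem_closedBall_zero_iff.1 (hmaps h0)).lt_or_eq with ha | ha
  · have hball := mapsTo_ball_of_mapsTo_closedBall (convex_ball 0 1).isPreconnected isOpen_ball
      hh hmaps h0 ha
    have hden : ∀ z ∈ ball (0 : ℂ) 1, 1 - conj (h 0) * h z ≠ 0 := fun z hz =>
      one_sub_conj_mul_ne_zero ha (mem_closedBall_zero_iff.1 (hmaps hz))
    have hdiff : DifferentiableOn ℂ (fun z => blaschkeFactor (h 0) (h z)) (ball 0 1) :=
      ((differentiableOn_const _).sub hh).div
        ((differentiableOn_const _).sub ((differentiableOn_const _).mul hh)) hden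
    have hschwarz := norm_le_norm_of_mapsTo_ball hdiff
      (fun z hz => mem_ball_zero_iff.2 (norm_blaschkeFactor_lt_one ha
        (mem_ball_zero_iff.1 (hball hz))) |> ball_subset_closedBall)
      (blaschkeFactor_self _) (mem_ball_zero_iff.1 ht)
    exact norm_le_of_norm_blaschkeFactor_le ha (mem_ball_zero_iff.1 (hball ht)) hschwarz
  · rw [ha, one_mul, add_comm, div_self (by positivity)]
    exact mem_closedBall_zero_iff.1 (hmaps ht)

end Complex

theorem golusin_schwarz_lemma_general (m : ℕ) (g h : ℂ → ℂ)
    (hh : DifferentiableOn ℂ h (ball (0 : ℂ) 1))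
    (hfac : ∀ t ∈ ball (0 : ℂ) 1, g t = t ^ m * h t)
    (hbound : ∀ t ∈ ball (0 : ℂ) 1, ‖g t‖ < 1) :
    ∀ t ∈ ball (0 : ℂ) 1,
      ‖g t‖ ≤ ‖t‖ ^ m *
        ((‖t‖ + ‖h 0‖) / (1 + ‖h 0‖ * ‖t‖)) := by
  have hmaps : MapsTo h (ball 0 1) (closedBall 0 1) := fun z hz =>
    mem_closedBall_zero_iff.2 <| Complex.norm_le_of_forall_norm_pow_smul_le hh
      (fun t ht => by rw [smul_eq_mul, ← hfac t ht]; exact (hbound t ht).le) hz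
  intro t ht
  rw [hfac t ht, norm_mul, norm_pow]
  exact mul_le_mul_of_nonneg_left (Complex.norm_le_of_mapsTo_closedBall hh hmaps ht)
    (by positivity)

/-- **Golusin's improvement of the Schwarz lemma** (inequality (13) of the paper).
If `g` is holomorphic on the unit disk with `|g| < 1` and vanishes at `0` to order at
least `m ≥ 1`, i.e. `g(t) = t^m h(t)` with `h` holomorphic on the disk (so that the
`m`-th Taylor coefficient of `g` is `c_m = h(0)`), then
`|g(t)| ≤ |t|^m (|t| + |c_m|)/(1 + |c_m||t|)` for every `t` in the disk. -/
theorem golusin_schwarz_lemma (m : ℕ) (hm : 1 ≤ m) (g h : ℂ → ℂ)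
    (hg : DifferentiableOn ℂ g (ball (0 : ℂ) 1))
    (hh : DifferentiableOn ℂ h (ball (0 : ℂ) 1))
    (hfac : ∀ t ∈ ball (0 : ℂ) 1, g t = t ^ m * h t)
    (hbound : ∀ t ∈ ball (0 : ℂ) 1, ‖g t‖ < 1) :
    ∀ t ∈ ball (0 : ℂ) 1,
      ‖g t‖ ≤ ‖t‖ ^ m *
        ((‖t‖ + ‖h 0‖) / (1 + ‖h 0‖ * ‖t‖)) :=
  golusin_schwarz_lemma_general m g h hh hfac hbound
end

section
/- Let D ⊂ ℂ be a domain, M > 0, and let λ : D → (0, M] be upper semicontinuous with generalized Laplacian satisfying Δ(log λ)(z) ≥ 4·λ(z)² at every z ∈ D, and let λ₀ : D → (0, M] be of class C² with (ordinary) Laplacian satisfying Δ(log λ₀)(z) = 4·λ₀(z)² on D. If λ(z) ≤ λ₀(z) for all z ∈ D, then the function u := log(λ/λ₀) satisfies the generalized-Laplacian inequality Δu(z) ≥ 8M²·u(z) at every point z ∈ D. -/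
open MeasureTheory Filter Set

/-- The extended-real analogue of `ENNReal.ofReal`: the nonnegative part of an
extended real number, sending `⊤` to `⊤` and everything `≤ 0` (including `⊥`) to `0`. -/
noncomputable def EReal.toENN (x : EReal) : ENNReal :=
  if x = ⊤ then ⊤ else ENNReal.ofReal x.toReal

/-- The mean value `(1/(2π)) ∫₀^{2π} u(z + r e^{iθ}) dθ` of an extended-real-valued
function over the circle of radius `r` centered at `z`, computed as the difference of the
lower integrals of the positive and negative parts. -/
noncomputable def circleMean (u : ℂ → EReal) (z : ℂ) (r : ℝ) : EReal :=
  (((2 * Real.pi)⁻¹ : ℝ) : EReal) *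
    (((∫⁻ θ in Set.Ioc (0 : ℝ) (2 * Real.pi),
        EReal.toENN (u (z + r * Complex.exp (θ * Complex.I)))) : ENNReal) -
     ((∫⁻ θ in Set.Ioc (0 : ℝ) (2 * Real.pi),
        EReal.toENN (-(u (z + r * Complex.exp (θ * Complex.I))))) : ENNReal))

/-- The generalized Laplacian
`Δu(z) = 4 liminf_{r→0⁺} r⁻² [(1/(2π)) ∫₀^{2π} u(z + re^{iθ}) dθ − u(z)]`. -/
noncomputable def genLap (u : ℂ → EReal) (z : ℂ) : EReal :=
  (4 : EReal) * Filter.liminf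
    (fun r : ℝ => (((r ^ 2)⁻¹ : ℝ) : EReal) * (circleMean u z r - u z))
    (nhdsWithin 0 (Set.Ioi 0))

/-- The ordinary Laplacian `Δf = ∂²f/∂x² + ∂²f/∂y²` of a function `f : ℂ → ℝ`. -/
noncomputable def lap (f : ℂ → ℝ) (z : ℂ) : ℝ :=
  deriv (deriv (fun t : ℝ => f (z + (t : ℂ)))) 0 +
  deriv (deriv (fun t : ℝ => f (z + (t : ℂ) * Complex.I))) 0

/-! Write `u = log λ - log λ₀`. Since `log λ₀` is `C²`, a second-order Taylor expansion that is
uniform on small circles gives `r⁻² (mean of log λ₀ on the circle of radius r - log λ₀(z)) →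
Δ(log λ₀)(z) / 4`. Wherever the circle mean of `log λ` is finite, `log λ` is integrable on that
circle and the difference quotient of `u` is exactly that of `log λ` minus that of `log λ₀`; passing
to the liminf gives `Δu ≥ Δ(log λ) - Δ(log λ₀) ≥ 4λ² - 4λ₀²`. Finally `0 < λ ≤ λ₀ ≤ M` gives
`λ₀ - λ ≤ M log(λ₀/λ)` and `λ + λ₀ ≤ 2M`, hence `4(λ² - λ₀²) ≥ 8M² log(λ/λ₀)`. -/

open Topology Asymptotics Metric Real
open Complex (I)

lemma sub_le_mul_log_div {s t M : ℝ} (hs : 0 < s) (hst : s ≤ t) (htM : t ≤ M) :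
    t - s ≤ M * Real.log (t / s) := by
  have ht : 0 < t := hs.trans_le hst
  have hlog : 1 - s / t ≤ Real.log (t / s) := by
    simpa using Real.one_sub_inv_le_log_of_pos (div_pos ht hs)
  calc t - s = t * (1 - s / t) := by field_simp
    _ ≤ M * Real.log (t / s) :=
      mul_le_mul htM hlog (sub_nonneg.2 (div_le_one_of_le₀ hst ht.le)) (ht.le.trans htM)

lemma two_mul_sq_mul_log_div_le_sq_sub_sq {s t M : ℝ} (hs : 0 < s) (hst : s ≤ t) (htM : t ≤ M) :
    2 * M ^ 2 * Real.log (s / t) ≤ s ^ 2 - t ^ 2 := by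
  have hlog : 0 ≤ Real.log (t / s) := Real.log_nonneg ((one_le_div hs).2 hst)
  have hkey := sub_le_mul_log_div hs hst htM
  have hM : 0 ≤ M := hs.le.trans (hst.trans htM)
  rw [← neg_neg (Real.log (s / t)), ← Real.log_inv, inv_div]
  nlinarith [mul_le_mul_of_nonneg_right hkey (by linarith : 0 ≤ t + s), mul_nonneg hM hlog]

section Semicontinuity

variable {α : Type*} [TopologicalSpace α]

theorem UpperSemicontinuousOn.log {f : α → ℝ} {s : Set α} (hf : UpperSemicontinuousOn f s)
    (hpos : ∀ x ∈ s, 0 < f x) : UpperSemicontinuousOn (fun x => Real.log (f x)) s := by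
  intro x hx y hy
  filter_upwards [hf x hx (Real.exp y) ((Real.log_lt_iff_lt_exp (hpos x hx)).1 hy),
    self_mem_nhdsWithin] with x' hx' hs
  exact (Real.log_lt_iff_lt_exp (hpos x' hs)).2 hx'

theorem UpperSemicontinuousOn.upperSemicontinuousAt {β : Type*} [Preorder β] {f : α → β}
    {s : Set α} {x : α} (hf : UpperSemicontinuousOn f s) (hs : s ∈ 𝓝 x) :
    UpperSemicontinuousAt f x := by
  intro y hy
  have := hf x (mem_of_mem_nhds hs) y hy
  rwa [nhdsWithin_eq_nhds.2 hs] at this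

end Semicontinuity

section Taylor

variable {E F : Type*} [NormedAddCommGroup E] [NormedSpace ℝ E] [NormedAddCommGroup F]
  [NormedSpace ℝ F] {v : E → F} {z : E}

theorem ContDiffAt.isLittleO_sub_taylor_two (hv : ContDiffAt ℝ 2 v z) :
    (fun h => v (z + h) - v z - fderiv ℝ v z h - (2 : ℝ)⁻¹ • fderiv ℝ (fderiv ℝ v) z h h)
      =o[𝓝 0] fun h => ‖h‖ ^ 2 := by
  set B := fderiv ℝ (fderiv ℝ v) z
  have hB : HasFDerivAt (fderiv ℝ v) B z :=
    ((hv.fderiv_right (m := 1) le_rfl).differentiableAt one_ne_zero).hasFDerivAt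
  have hsymm : ∀ h k, B h k = B k h := (hv.isSymmSndFDerivAt (by simp)).eq
  have hdiff : ∀ᶠ k in 𝓝 (0 : E), DifferentiableAt ℝ v (z + k) :=
    ((continuous_const_add z).tendsto' 0 z (add_zero z)).eventually
      ((hv.eventually (by simp)).mono fun y hy => hy.differentiableAt two_ne_zero)
  refine IsLittleO.of_bound fun ε hε => ?_
  obtain ⟨δ, hδ, hball⟩ := Metric.eventually_nhds_iff_ball.1
    (((hasFDerivAt_iff_isLittleO_nhds_zero.1 hB).def hε).and hdiff)
  filter_upwards [ball_mem_nhds 0 hδ] with h hh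
  have hsub : closedBall (0 : E) ‖h‖ ⊆ ball 0 δ := closedBall_subset_ball (by simpa using hh)
  -- On the ball of radius `‖h‖` the derivative of the remainder is `o(‖h‖)`; apply the mean
  -- value inequality there.
  set φ : E → F := fun k => v (z + k) - fderiv ℝ v z k - (2 : ℝ)⁻¹ • B k k
  have hφ : ∀ k ∈ closedBall (0 : E) ‖h‖, HasFDerivWithinAt φ
      (fderiv ℝ v (z + k) - fderiv ℝ v z - B k) (closedBall 0 ‖h‖) k := by
    intro k hk
    have h1 : HasFDerivAt (fun k => v (z + k)) (fderiv ℝ v (z + k)) k :=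
      (hball k (hsub hk)).2.hasFDerivAt.comp k ((hasFDerivAt_id k).const_add z)
    have h2 := B.hasFDerivAt_of_bilinear (hasFDerivAt_id k) (hasFDerivAt_id k)
    refine (((h1.sub (fderiv ℝ v z).hasFDerivAt).sub (h2.const_smul (2 : ℝ)⁻¹)).congr_fderiv
      ?_).hasFDerivWithinAt
    ext w
    norm_num [hsymm w k, ← add_smul]
  have hbound : ∀ k ∈ closedBall (0 : E) ‖h‖,
      ‖fderiv ℝ v (z + k) - fderiv ℝ v z - B k‖ ≤ ε * ‖h‖ :=
    fun k hk => (hball k (hsub hk)).1.trans (by gcongr; simpa using hk)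
  have := (convex_closedBall (0 : E) ‖h‖).norm_image_sub_le_of_norm_hasFDerivWithin_le hφ hbound
    (mem_closedBall_self (norm_nonneg h)) (mem_closedBall_zero_iff.2 le_rfl)
  simp only [φ, add_zero, map_zero, smul_zero, sub_zero] at this
  rw [norm_pow, norm_norm, sq, ← mul_assoc]
  convert this using 2
  abel

theorem ContDiffAt.deriv_deriv_comp_add_smul (hv : ContDiffAt ℝ 2 v z) (c : E) :
    deriv (deriv fun t : ℝ => v (z + t • c)) 0 = fderiv ℝ (fderiv ℝ v) z c c := by
  have hline : ∀ t : ℝ, HasDerivAt (fun s : ℝ => z + s • c) c t := fun t => by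
    simpa using ((hasDerivAt_id t).smul_const c).const_add z
  have htend : Tendsto (fun t : ℝ => z + t • c) (𝓝 0) (𝓝 z) := by
    simpa using (hline 0).continuousAt.tendsto
  have hderiv : (deriv fun t : ℝ => v (z + t • c)) =ᶠ[𝓝 0] fun t => fderiv ℝ v (z + t • c) c :=
    (htend.eventually ((hv.eventually (by simp)).mono fun y hy => hy.differentiableAt two_ne_zero))
      |>.mono fun t ht => (ht.hasFDerivAt.comp_hasDerivAt t (hline t)).deriv
  have hB : HasFDerivAt (fderiv ℝ v) (fderiv ℝ (fderiv ℝ v) z) (z + (0 : ℝ) • c) := by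
    rw [zero_smul, add_zero]
    exact ((hv.fderiv_right (m := 1) le_rfl).differentiableAt one_ne_zero).hasFDerivAt
  have h1 : HasDerivAt (fun t : ℝ => fderiv ℝ v (z + t • c)) (fderiv ℝ (fderiv ℝ v) z c) 0 :=
    hB.comp_hasDerivAt (x := (0 : ℝ)) (hline 0)
  have h2 : HasDerivAt (fun t : ℝ => fderiv ℝ v (z + t • c) c)
      (fderiv ℝ (fderiv ℝ v) z c c) 0 := by
    simpa using h1.clm_apply (hasDerivAt_const (0 : ℝ) c)
  rw [hderiv.deriv_eq, h2.deriv]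

end Taylor

theorem lap_eq_fderiv_fderiv {v : ℂ → ℝ} {z : ℂ} (hv : ContDiffAt ℝ 2 v z) :
    lap v z = fderiv ℝ (fderiv ℝ v) z 1 1 + fderiv ℝ (fderiv ℝ v) z I I := by
  simp only [lap, ← hv.deriv_deriv_comp_add_smul, Complex.real_smul, mul_one]

section CircleAverage

lemma circleMap_sub_center_eq_smul (z : ℂ) (r θ : ℝ) :
    circleMap z r θ - z = (r * Real.cos θ) • (1 : ℂ) + (r * Real.sin θ) • I := by
  simp only [circleMap_sub_center, circleMap_zero, Complex.real_smul, Complex.exp_mul_I]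
  push_cast
  ring_nf

theorem circleAverage_quadratic (c : ℝ) (L : ℂ →L[ℝ] ℝ) (B : ℂ →L[ℝ] ℂ →L[ℝ] ℝ) (z : ℂ)
    (r : ℝ) :
    circleAverage (fun w => c + L (w - z) + 2⁻¹ * B (w - z) (w - z)) z r =
      c + r ^ 2 / 4 * (B 1 1 + B I I) := by
  have h : ∀ θ : ℝ, c + L (circleMap z r θ - z) +
      2⁻¹ * B (circleMap z r θ - z) (circleMap z r θ - z) =
      c + r * L 1 * Real.cos θ + r * L I * Real.sin θ + r ^ 2 / 2 * B 1 1 * Real.cos θ ^ 2 +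
        r ^ 2 / 2 * (B 1 I + B I 1) * (Real.sin θ * Real.cos θ) +
        r ^ 2 / 2 * B I I * Real.sin θ ^ 2 := by
    intro θ
    simp only [circleMap_sub_center_eq_smul, map_add, map_smul, add_apply, smul_apply,
      smul_eq_mul]
    ring
  simp only [circleAverage_def, h]
  rw [intervalIntegral.integral_add, intervalIntegral.integral_add, intervalIntegral.integral_add,
    intervalIntegral.integral_add, intervalIntegral.integral_add, intervalIntegral.integral_const,
    intervalIntegral.integral_const_mul, intervalIntegral.integral_const_mul,
    intervalIntegral.integral_const_mul, intervalIntegral.integral_const_mul,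
    intervalIntegral.integral_const_mul, integral_cos, integral_sin, integral_cos_sq,
    integral_sin_mul_cos₁, integral_sin_sq]
  · simp only [Real.sin_two_pi, Real.cos_two_pi, Real.sin_zero, Real.cos_zero, smul_eq_mul]
    field_simp
    ring
  all_goals exact Continuous.intervalIntegrable (by fun_prop) _ _

lemma eventually_forall_circleMap {p : ℂ → Prop} {z : ℂ} (h : ∀ᶠ w in 𝓝 z, p w) :
    ∀ᶠ r in 𝓝[>] (0 : ℝ), ∀ θ, p (circleMap z r θ) := by
  obtain ⟨δ, hδ, hball⟩ := Metric.eventually_nhds_iff_ball.1 h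
  filter_upwards [Ioo_mem_nhdsGT hδ] with r ⟨hr, hrδ⟩ θ
  refine hball _ (mem_ball.2 ?_)
  rwa [dist_eq_norm, circleMap_sub_center, norm_circleMap_zero, abs_of_pos hr]

lemma eventually_circleIntegrable {v : ℂ → ℝ} {z : ℂ} (h : ∀ᶠ w in 𝓝 z, ContinuousAt v w) :
    ∀ᶠ r in 𝓝[>] (0 : ℝ), CircleIntegrable v z r := by
  filter_upwards [eventually_forall_circleMap h] with r hr
  exact (continuous_iff_continuousAt.2 fun θ =>
    (hr θ).comp (continuous_circleMap z r).continuousAt).intervalIntegrable _ _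

theorem tendsto_inv_sq_mul_circleAverage_sub {v : ℂ → ℝ} {z : ℂ} (hv : ContDiffAt ℝ 2 v z) :
    Tendsto (fun r : ℝ => (r ^ 2)⁻¹ * (circleAverage v z r - v z)) (𝓝[>] 0)
      (𝓝 (lap v z / 4)) := by
  set P : ℂ → ℝ := fun w =>
    v z + fderiv ℝ v z (w - z) + 2⁻¹ * fderiv ℝ (fderiv ℝ v) z (w - z) (w - z)
  have hP : Continuous P := by fun_prop
  rw [Metric.tendsto_nhds]
  intro ε hε
  obtain ⟨δ, hδ, hball⟩ :=
    Metric.eventually_nhds_iff_ball.1 (hv.isLittleO_sub_taylor_two.def (half_pos hε))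
  filter_upwards [Ioo_mem_nhdsGT hδ, eventually_circleIntegrable
    ((hv.eventually (by simp)).mono fun w hw => hw.continuousAt)] with r ⟨hr, hrδ⟩ hv_int
  have hP_int : CircleIntegrable P z r := hP.continuousOn.circleIntegrable hr.le
  have hrem : |circleAverage (v - P) z r| ≤ ε / 2 * r ^ 2 := by
    refine abs_circleAverage_le_circleAverage_abs.trans
      (circleAverage_mono_on_of_le_circle (hv_int.sub hP_int).abs fun w hw => ?_)
    rw [mem_sphere_iff_norm, abs_of_pos hr] at hw
    have := hball (w - z) (by simpa [hw] using hrδ)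
    simp only [add_sub_cancel, hw, norm_pow, Real.norm_eq_abs, abs_of_pos hr, smul_eq_mul] at this
    simpa [P, sub_sub] using this
  have hsplit : circleAverage v z r = v z + r ^ 2 * (lap v z / 4) + circleAverage (v - P) z r := by
    rw [circleAverage_sub hv_int hP_int, circleAverage_quadratic, lap_eq_fderiv_fderiv hv]
    ring
  have hdiff : (r ^ 2)⁻¹ * (circleAverage v z r - v z) - lap v z / 4 =
      (r ^ 2)⁻¹ * circleAverage (v - P) z r := by
    rw [hsplit]
    field_simp
    ring
  rw [Real.dist_eq, hdiff, abs_mul, abs_of_pos (by positivity)]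
  calc (r ^ 2)⁻¹ * |circleAverage (v - P) z r| ≤ (r ^ 2)⁻¹ * (ε / 2 * r ^ 2) := by gcongr
    _ < ε := by field_simp; linarith

end CircleAverage

section PosNegParts

variable {α : Type*} [MeasurableSpace α] {μ : Measure α} {f : α → ℝ}

lemma ENNReal.ofReal_abs_le_add (x : ℝ) :
    ENNReal.ofReal |x| ≤ ENNReal.ofReal x + ENNReal.ofReal (-x) := by
  rcases le_total 0 x with hx | hx
  · simp [abs_of_nonneg hx]
  · simp [abs_of_nonpos hx]

lemma MeasureTheory.Integrable.lintegral_ofReal_ne_top (hf : Integrable f μ) :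
    ∫⁻ a, ENNReal.ofReal (f a) ∂μ ≠ ⊤ :=
  ne_top_of_le_ne_top hf.2.ne (lintegral_mono fun a => Real.ofReal_le_enorm (f a))

lemma MeasureTheory.Integrable.coe_integral_eq_lintegral_ofReal_sub (hf : Integrable f μ) :
    ((∫ a, f a ∂μ : ℝ) : EReal) =
      ((∫⁻ a, ENNReal.ofReal (f a) ∂μ : ENNReal) : EReal) -
        (∫⁻ a, ENNReal.ofReal (-f a) ∂μ : ENNReal) := by
  have hneg : ∫⁻ a, ENNReal.ofReal (-f a) ∂μ ≠ ⊤ := hf.neg.lintegral_ofReal_ne_top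
  rw [integral_eq_lintegral_pos_part_sub_lintegral_neg_part hf, EReal.coe_sub,
    EReal.coe_ennreal_toReal hf.lintegral_ofReal_ne_top, EReal.coe_ennreal_toReal hneg]

lemma MeasureTheory.integrable_of_lintegral_ofReal_ne_top (hfm : AEStronglyMeasurable f μ)
    (hpos : ∫⁻ a, ENNReal.ofReal (f a) ∂μ ≠ ⊤) (hneg : ∫⁻ a, ENNReal.ofReal (-f a) ∂μ ≠ ⊤) :
    Integrable f μ := by
  refine ⟨hfm, ?_⟩
  calc ∫⁻ a, ‖f a‖ₑ ∂μ ≤ ∫⁻ a, ENNReal.ofReal (f a) + ENNReal.ofReal (-f a) ∂μ :=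
        lintegral_mono fun a =>
          (Real.enorm_eq_ofReal_abs _).trans_le (ENNReal.ofReal_abs_le_add _)
    _ = (∫⁻ a, ENNReal.ofReal (f a) ∂μ) + ∫⁻ a, ENNReal.ofReal (-f a) ∂μ :=
        lintegral_add_left' hfm.aemeasurable.ennreal_ofReal _
    _ < ⊤ := ENNReal.add_lt_top.2 ⟨hpos.lt_top, hneg.lt_top⟩

end PosNegParts

section CircleMean

@[simp] lemma EReal.toENN_coe (x : ℝ) : EReal.toENN x = ENNReal.ofReal x := by
  simp [EReal.toENN]

lemma circleMean_coe (f : ℂ → ℝ) (z : ℂ) (r : ℝ) :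
    circleMean (fun w => (f w : EReal)) z r = (((2 * π)⁻¹ : ℝ) : EReal) *
      (((∫⁻ θ in Ioc 0 (2 * π), ENNReal.ofReal (f (circleMap z r θ))) : ENNReal) -
        ((∫⁻ θ in Ioc 0 (2 * π), ENNReal.ofReal (-f (circleMap z r θ))) : ENNReal)) := by
  simp only [circleMean, ← EReal.coe_neg, EReal.toENN_coe]
  rfl

theorem circleMean_coe_eq_circleAverage {f : ℂ → ℝ} {z : ℂ} {r : ℝ}
    (hf : CircleIntegrable f z r) :
    circleMean (fun w => (f w : EReal)) z r = circleAverage f z r := by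
  have hint := (intervalIntegrable_iff_integrableOn_Ioc_of_le two_pi_pos.le).1 hf
  rw [circleMean_coe, circleAverage_def, intervalIntegral.integral_of_le two_pi_pos.le,
    smul_eq_mul, EReal.coe_mul, hint.coe_integral_eq_lintegral_ofReal_sub]

/-- Upper semicontinuity bounds `f` above on the circle, so only the negative part of `f` can make
the circle mean infinite, and then the mean is `⊥`. -/
theorem circleIntegrable_of_circleMean_ne_bot {f : ℂ → ℝ} {z : ℂ} {r : ℝ}
    (hf : UpperSemicontinuous fun θ => f (circleMap z r θ))
    (hbot : circleMean (fun w => (f w : EReal)) z r ≠ ⊥) : CircleIntegrable f z r := by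
  obtain ⟨C, hC⟩ :=
    (hf.upperSemicontinuousOn (Icc 0 (2 * π))).bddAbove_of_isCompact isCompact_Icc
  have hpos : ∫⁻ θ in Ioc 0 (2 * π), ENNReal.ofReal (f (circleMap z r θ)) ≠ ⊤ := by
    refine ne_top_of_le_ne_top (b := ∫⁻ _ in Ioc 0 (2 * π), ENNReal.ofReal C) ?_
      (setLIntegral_mono' measurableSet_Ioc fun θ hθ =>
        ENNReal.ofReal_le_ofReal (hC (mem_image_of_mem _ (Ioc_subset_Icc_self hθ))))
    simp [ENNReal.mul_eq_top]
  have hneg : ∫⁻ θ in Ioc 0 (2 * π), ENNReal.ofReal (-f (circleMap z r θ)) ≠ ⊤ := by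
    intro htop
    rw [circleMean_coe, htop, EReal.coe_ennreal_top, EReal.sub_top,
      EReal.coe_mul_bot_of_pos (by positivity)] at hbot
    exact hbot rfl
  exact (intervalIntegrable_iff_integrableOn_Ioc_of_le two_pi_pos.le).2
    (integrable_of_lintegral_ofReal_ne_top hf.measurable.aestronglyMeasurable hpos hneg)

end CircleMean

section GenLap

theorem Filter.EventuallyEq.genLap_eq {u v : ℂ → EReal} {z : ℂ} (h : u =ᶠ[𝓝 z] v) :
    genLap u z = genLap v z := by
  have hmean : ∀ᶠ r in 𝓝[>] (0 : ℝ), circleMean u z r = circleMean v z r := by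
    filter_upwards [eventually_forall_circleMap h] with r hr
    have hr' : ∀ θ : ℝ, u (z + r * Complex.exp (θ * I)) = v (z + r * Complex.exp (θ * I)) := hr
    simp only [circleMean, hr']
  rw [genLap, genLap, h.eq_of_nhds]
  exact congrArg _ (liminf_congr (hmean.mono fun r hr => by rw [hr]))

lemma coe_le_genLap_iff {u : ℂ → EReal} {z : ℂ} {a : ℝ} :
    (a : EReal) ≤ genLap u z ↔ ((a / 4 : ℝ) : EReal) ≤
      liminf (fun r : ℝ => (((r ^ 2)⁻¹ : ℝ) : EReal) * (circleMean u z r - u z)) (𝓝[>] 0) := by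
  rw [genLap, EReal.coe_div, EReal.div_le_iff_le_mul (by norm_num) (by simp)]
  rfl

theorem sub_lap_le_genLap_sub {f v : ℂ → ℝ} {z : ℂ} {a : ℝ}
    (hf : ∀ᶠ w in 𝓝 z, UpperSemicontinuousAt f w) (hv : ContDiffAt ℝ 2 v z)
    (ha : (a : EReal) ≤ genLap (fun w => (f w : EReal)) z) :
    ((a - lap v z : ℝ) : EReal) ≤ genLap (fun w => ((f w - v w : ℝ) : EReal)) z := by
  set T : ℝ → ℝ := fun r => (r ^ 2)⁻¹ * (circleAverage v z r - v z)
  have hstep : ∀ᶠ r in 𝓝[>] (0 : ℝ),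
      (((r ^ 2)⁻¹ : ℝ) : EReal) * (circleMean (fun w => (f w : EReal)) z r - f z) + (-T r : ℝ) ≤
        (((r ^ 2)⁻¹ : ℝ) : EReal) *
          (circleMean (fun w => ((f w - v w : ℝ) : EReal)) z r - (f z - v z : ℝ)) := by
    filter_upwards [self_mem_nhdsWithin, eventually_forall_circleMap hf,
      eventually_circleIntegrable ((hv.eventually (by simp)).mono fun w hw => hw.continuousAt)]
      with r hr hfr hvr
    by_cases hbot : circleMean (fun w => (f w : EReal)) z r = ⊥
    · rw [hbot, EReal.bot_sub, EReal.mul_bot_of_pos (EReal.coe_pos.2 (inv_pos.2 (pow_pos hr 2))),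
        EReal.bot_add]
      exact bot_le
    have hfi := circleIntegrable_of_circleMean_ne_bot
      (fun θ => (hfr θ).comp (continuous_circleMap z r).continuousAt) hbot
    rw [circleMean_coe_eq_circleAverage hfi,
      circleMean_coe_eq_circleAverage (f := fun w => f w - v w) (hfi.sub hvr),
      circleAverage_fun_sub hfi hvr]
    norm_cast
    exact le_of_eq (by ring)
  have hT : Tendsto (fun r => ((-T r : ℝ) : EReal)) (𝓝[>] 0) (𝓝 ((-(lap v z / 4) : ℝ) : EReal)) :=
    (continuous_coe_real_ereal.tendsto _).comp (tendsto_inv_sq_mul_circleAverage_sub hv).neg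
  rw [coe_le_genLap_iff] at ha ⊢
  calc (((a - lap v z) / 4 : ℝ) : EReal)
      = ((a / 4 : ℝ) : EReal) + ((-(lap v z / 4) : ℝ) : EReal) := by
        rw [← EReal.coe_add]; ring_nf
    _ ≤ _ + _ := add_le_add ha hT.liminf_eq.ge
    _ ≤ _ := EReal.le_liminf_add
    _ ≤ _ := liminf_le_liminf hstep

end GenLap

theorem log_quotient_laplacian_ineq_general (D : Set ℂ) (hDopen : IsOpen D)
    (M : ℝ) (lam lam0 : ℂ → ℝ)
    (hlam_pos : ∀ z ∈ D, 0 < lam z)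
    (husc : UpperSemicontinuousOn lam D)
    (hlap : ∀ z ∈ D,
      ((4 * lam z ^ 2 : ℝ) : EReal) ≤ genLap (fun w => ((Real.log (lam w) : ℝ) : EReal)) z)
    (hC2 : ContDiffOn ℝ 2 lam0 D)
    (hlam0_pos : ∀ z ∈ D, 0 < lam0 z) (hlam0_le : ∀ z ∈ D, lam0 z ≤ M)
    (hlap0 : ∀ z ∈ D, lap (fun w => Real.log (lam0 w)) z = 4 * lam0 z ^ 2)
    (hle : ∀ z ∈ D, lam z ≤ lam0 z) :
    ∀ z ∈ D,
      ((8 * M ^ 2 * Real.log (lam z / lam0 z) : ℝ) : EReal) ≤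
        genLap (fun w => ((Real.log (lam w / lam0 w) : ℝ) : EReal)) z := by
  intro z hz
  have hD : D ∈ 𝓝 z := hDopen.mem_nhds hz
  have hf : ∀ᶠ w in 𝓝 z, UpperSemicontinuousAt (fun w => Real.log (lam w)) w :=
    eventually_of_mem hD fun w hw =>
      (husc.log hlam_pos).upperSemicontinuousAt (hDopen.mem_nhds hw)
  have hv : ContDiffAt ℝ 2 (fun w => Real.log (lam0 w)) z :=
    (hC2.contDiffAt hD).log (hlam0_pos z hz).ne'
  have hsplit : (fun w => ((Real.log (lam w / lam0 w) : ℝ) : EReal)) =ᶠ[𝓝 z]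
      fun w => ((Real.log (lam w) - Real.log (lam0 w) : ℝ) : EReal) :=
    eventually_of_mem hD fun w hw => by
      simp only [Real.log_div (hlam_pos w hw).ne' (hlam0_pos w hw).ne']
  have key := sub_lap_le_genLap_sub hf hv (hlap z hz)
  rw [hlap0 z hz] at key
  rw [hsplit.genLap_eq]
  refine le_trans (EReal.coe_le_coe_iff.2 ?_) key
  linarith [two_mul_sq_mul_log_div_le_sq_sub_sq (hlam_pos z hz) (hle z hz) (hlam0_le z hz)]

/-- Key differential inequality from step 4⁰ of the proof of Theorem 1: if
`λ : D → (0, M]` is upper semicontinuous with generalized Laplacian satisfying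
`Δ(log λ) ≥ 4λ²`, `λ₀ : D → (0, M]` is `C²` with `Δ(log λ₀) = 4λ₀²` (ordinary
Laplacian), and `λ ≤ λ₀` on `D`, then `u = log(λ/λ₀)` satisfies `Δu ≥ 8M² u` on `D`. -/
theorem log_quotient_laplacian_ineq (D : Set ℂ) (hDopen : IsOpen D) (hDconn : IsConnected D)
    (M : ℝ) (hM : 0 < M) (lam lam0 : ℂ → ℝ)
    (hlam_pos : ∀ z ∈ D, 0 < lam z) (hlam_le : ∀ z ∈ D, lam z ≤ M)
    (husc : UpperSemicontinuousOn lam D)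
    (hlap : ∀ z ∈ D,
      ((4 * lam z ^ 2 : ℝ) : EReal) ≤ genLap (fun w => ((Real.log (lam w) : ℝ) : EReal)) z)
    (hC2 : ContDiffOn ℝ 2 lam0 D)
    (hlam0_pos : ∀ z ∈ D, 0 < lam0 z) (hlam0_le : ∀ z ∈ D, lam0 z ≤ M)
    (hlap0 : ∀ z ∈ D, lap (fun w => Real.log (lam0 w)) z = 4 * lam0 z ^ 2)
    (hle : ∀ z ∈ D, lam z ≤ lam0 z) :
    ∀ z ∈ D,
      ((8 * M ^ 2 * Real.log (lam z / lam0 z) : ℝ) : EReal) ≤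
        genLap (fun w => ((Real.log (lam w / lam0 w) : ℝ) : EReal)) z :=
  log_quotient_laplacian_ineq_general D hDopen M lam lam0 hlam_pos husc hlap hC2 hlam0_pos hlam0_le
    hlap0 hle
end

section
/- The supremum of |∫_𝔻 ( \overline{z}/|z| ) · ω(z)² dA(z)|, taken over all holomorphic functions ω on the open unit disk 𝔻 satisfying ∫_𝔻 |ω(z)|² dA(z) = 1, equals 2√2/3. (Here the integrand is defined to be 0 at z = 0.) -/
/-!
In polar coordinates both integrals over the disk become radial integrals of circle averages.
On the circle `|z| = r` one has `z̄ / |z| = r / z`, so the Cauchy formula for `(ω²)'(0)` turns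
the pairing into `(4π/3) ω(0) ω'(0)`. On the same circle `ω - (ω(0) + ω'(0) z)` is orthogonal
to `1` and to `z`, whence the Pythagorean identity
`⨍ |ω|² = |ω(0)|² + r² |ω'(0)|² + ⨍ |ω - ω(0) - ω'(0) z|²` and, after integrating in `r`,
`∫_𝔻 |ω|² ≥ π |ω(0)|² + (π/2) |ω'(0)|²`. By AM-GM, `∫_𝔻 |ω|² = 1` forces
`|ω(0) ω'(0)| ≤ 1 / (√2 π)`, i.e. a pairing of at most `2√2/3`, and `ω(z) = 1/√(2π) + z/√π`
attains it.
-/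

open Metric MeasureTheory Set Complex Real
open scoped ComplexConjugate

section CircleAverage

variable {U : Set ℂ} {c : ℂ} {R : ℝ}

theorem circleAverage_inv_sub_smul_eq_deriv {E : Type*} [NormedAddCommGroup E]
    [NormedSpace ℂ E] [CompleteSpace E] {f : ℂ → E} (hU : IsOpen U)
    (hf : DifferentiableOn ℂ f U) (hRU : closedBall c R ⊆ U) (hR : 0 < R) :
    circleAverage (fun z ↦ (z - c)⁻¹ • f z) c R = deriv f c := by
  rw [circleAverage_eq_circleIntegral hR.ne',
    ← two_pi_I_inv_smul_circleIntegral_sub_sq_inv_smul_of_differentiable hU hRU hf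
      (mem_ball_self hR)]
  simp_rw [smul_smul, ← mul_inv, ← sq]

theorem conj_sub_eq_sq_div_sub {z : ℂ} (hz : z ∈ sphere c R) (hR : R ≠ 0) :
    conj (z - c) = R ^ 2 / (z - c) := by
  have hzc : z - c ≠ 0 := by
    rw [sub_ne_zero]
    rintro rfl
    simp [eq_comm, hR] at hz
  rw [eq_div_iff hzc, mul_comm, mul_conj, normSq_eq_norm_sq, ← dist_eq_norm, mem_sphere.mp hz]
  push_cast
  ring

variable {f : ℂ → ℂ}

theorem circleAverage_conj_sub_mul_eq_deriv (hU : IsOpen U) (hf : DifferentiableOn ℂ f U)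
    (hRU : closedBall c R ⊆ U) (hR : 0 < R) :
    circleAverage (fun z ↦ conj (z - c) * f z) c R = R ^ 2 * deriv f c := by
  rw [← circleAverage_inv_sub_smul_eq_deriv hU hf hRU hR, ← smul_eq_mul,
    ← circleAverage_fun_smul]
  refine circleAverage_congr_sphere fun z hz ↦ ?_
  rw [abs_of_pos hR] at hz
  simp only [conj_sub_eq_sq_div_sub hz hR.ne', smul_eq_mul]
  ring

theorem circleAverage_conj_affine_mul (hU : IsOpen U) (hf : DifferentiableOn ℂ f U)
    (hRU : closedBall c R ⊆ U) (hR : 0 < R) (a b : ℂ) :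
    circleAverage (fun z ↦ conj (a + b * (z - c)) * f z) c R
      = conj a * f c + R ^ 2 * conj b * deriv f c := by
  have hf_sphere : ContinuousOn f (sphere c R) :=
    hf.continuousOn.mono (sphere_subset_closedBall.trans hRU)
  have hconj : ContinuousOn (fun z ↦ conj (z - c) * f z) (sphere c R) :=
    (by fun_prop : Continuous fun z : ℂ ↦ conj (z - c)).continuousOn.mul hf_sphere
  have hf_mean : circleAverage f c R = f c :=
    (hf.diffContOnCl_ball (R := |R|) (by rwa [abs_of_pos hR])).circleAverage
  calc circleAverage (fun z ↦ conj (a + b * (z - c)) * f z) c R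
      = circleAverage (fun z ↦ conj a • f z + conj b • (conj (z - c) * f z)) c R := by
        congr 1
        ext z
        simp only [map_add, map_mul, smul_eq_mul]
        ring
    _ = conj a * f c + R ^ 2 * conj b * deriv f c := by
        rw [circleAverage_fun_add (f₁ := fun z ↦ conj a • f z)
            (f₂ := fun z ↦ conj b • (conj (z - c) * f z))
            ((hf_sphere.const_smul (conj a)).circleIntegrable hR.le)
            ((hconj.const_smul (conj b)).circleIntegrable hR.le),
          circleAverage_fun_smul, circleAverage_fun_smul, hf_mean,
          circleAverage_conj_sub_mul_eq_deriv hU hf hRU hR, smul_eq_mul, smul_eq_mul]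
        ring

theorem sq_norm_eq_sq_norm_sub_add_re (w p : ℂ) :
    ‖w‖ ^ 2 = ‖w - p‖ ^ 2 + (2 * (conj p * w) - conj p * p).re := by
  simp only [Complex.sq_norm, normSq_apply, sub_re, sub_im, mul_re, mul_im, conj_re, conj_im,
    re_ofNat, im_ofNat]
  ring

theorem circleAverage_sq_norm_eq (hU : IsOpen U) (hf : DifferentiableOn ℂ f U)
    (hRU : closedBall c R ⊆ U) (hR : 0 < R) :
    circleAverage (fun z ↦ ‖f z‖ ^ 2) c R
      = ‖f c‖ ^ 2 + R ^ 2 * ‖deriv f c‖ ^ 2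
        + circleAverage (fun z ↦ ‖f z - (f c + deriv f c * (z - c))‖ ^ 2) c R := by
  set P : ℂ → ℂ := fun z ↦ f c + deriv f c * (z - c)
  have hP : DifferentiableOn ℂ P U := by fun_prop
  have hPc : P c = f c := by simp [P]
  have hP' : deriv P c = deriv f c := by simp [P]
  have hf_sphere : ContinuousOn f (sphere c R) :=
    hf.continuousOn.mono (sphere_subset_closedBall.trans hRU)
  have hP_sphere : ContinuousOn P (sphere c R) :=
    hP.continuousOn.mono (sphere_subset_closedBall.trans hRU)
  have hPf : ContinuousOn (fun z ↦ conj (P z) * f z) (sphere c R) :=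
    (continuous_conj.comp_continuousOn hP_sphere).mul hf_sphere
  have hPP : ContinuousOn (fun z ↦ conj (P z) * P z) (sphere c R) :=
    (continuous_conj.comp_continuousOn hP_sphere).mul hP_sphere
  set H : ℂ → ℂ := fun z ↦ (2 : ℂ) • (conj (P z) * f z) - conj (P z) * P z with hH_def
  have hH_cont : ContinuousOn H (sphere c R) := (hPf.const_smul (2 : ℂ)).sub hPP
  have hH : circleAverage H c R = ((‖f c‖ ^ 2 + R ^ 2 * ‖deriv f c‖ ^ 2 : ℝ) : ℂ) := by
    rw [hH_def, circleAverage_fun_sub (f₁ := fun z ↦ (2 : ℂ) • (conj (P z) * f z))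
      ((hPf.const_smul (2 : ℂ)).circleIntegrable hR.le) (hPP.circleIntegrable hR.le),
      circleAverage_fun_smul, circleAverage_conj_affine_mul hU hf hRU hR,
      circleAverage_conj_affine_mul hU hP hRU hR, hPc, hP', conj_mul', mul_assoc, conj_mul',
      smul_eq_mul]
    push_cast
    ring
  have hdist_int : CircleIntegrable (fun z ↦ ‖f z - P z‖ ^ 2) c R :=
    ((hf_sphere.sub hP_sphere).norm.pow 2).circleIntegrable hR.le
  calc circleAverage (fun z ↦ ‖f z‖ ^ 2) c R
      = circleAverage (fun z ↦ ‖f z - P z‖ ^ 2 + reCLM (H z)) c R := by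
        congr 1
        ext z
        simp only [hH_def, smul_eq_mul]
        exact sq_norm_eq_sq_norm_sub_add_re _ _
    _ = _ := by
        rw [circleAverage_fun_add (f₂ := fun z ↦ reCLM (H z)) hdist_int
            ((reCLM.continuous.comp_continuousOn hH_cont).circleIntegrable hR.le),
          ← Function.comp_def, reCLM.circleAverage_comp_comm (hH_cont.circleIntegrable hR.le),
          hH]
        simp only [reCLM_apply, ofReal_re]
        ring

theorem sq_norm_add_sq_mul_sq_norm_deriv_le_circleAverage (hU : IsOpen U)
    (hf : DifferentiableOn ℂ f U) (hRU : closedBall c R ⊆ U) (hR : 0 < R) :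
    ‖f c‖ ^ 2 + R ^ 2 * ‖deriv f c‖ ^ 2 ≤ circleAverage (fun z ↦ ‖f z‖ ^ 2) c R := by
  rw [circleAverage_sq_norm_eq hU hf hRU hR]
  exact le_add_of_nonneg_right (circleAverage_nonneg_of_nonneg fun z _ ↦ sq_nonneg _)

theorem circleAverage_sq_norm_affine (hR : 0 < R) (a b : ℂ) :
    circleAverage (fun z ↦ ‖a + b * (z - c)‖ ^ 2) c R = ‖a‖ ^ 2 + R ^ 2 * ‖b‖ ^ 2 := by
  rw [circleAverage_sq_norm_eq isOpen_univ (by fun_prop) (subset_univ _) hR]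
  simp [circleAverage_const]

end CircleAverage

section Polar

variable {E : Type*} [NormedAddCommGroup E] [NormedSpace ℝ E] {F : ℂ → E} {R : ℝ}

theorem polarCoord_symm_eq_circleMap (p : ℝ × ℝ) :
    Complex.polarCoord.symm p = circleMap 0 p.1 p.2 := by
  rw [Complex.polarCoord_symm_apply, circleMap_zero, exp_mul_I, ← ofReal_cos, ← ofReal_sin]

theorem circleMap_zero_mem_ball_zero_iff {r θ : ℝ} (hr : 0 ≤ r) :
    circleMap 0 r θ ∈ ball 0 R ↔ r < R := by
  simp [abs_of_nonneg hr]

theorem integrableOn_comp_polarCoord_symm (hF : Integrable F) :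
    IntegrableOn (fun p : ℝ × ℝ ↦ p.1 • F (Complex.polarCoord.symm p)) polarCoord.target := by
  have hG : Integrable (F ∘ measurableEquivRealProd.symm) :=
    (volume_preserving_equiv_real_prod.symm.integrable_comp_emb
      measurableEquivRealProd.symm.measurableEmbedding).mpr hF
  refine ((integrableOn_image_iff_integrableOn_abs_det_fderiv_smul volume
    polarCoord.open_target.measurableSet
    (fun p _ ↦ (hasFDerivAt_polarCoord_symm p).hasFDerivWithinAt) polarCoord.symm.injOn _).mp
    hG.integrableOn).congr_fun (fun p hp ↦ ?_) polarCoord.open_target.measurableSet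
  simp only [det_fderivPolarCoordSymm, abs_of_pos (show 0 < p.1 from hp.1)]
  rfl

theorem integral_Ioo_neg_pi_pi_circleMap (c : ℂ) (r : ℝ) :
    ∫ θ in Ioo (-π) π, F (circleMap c r θ) = (2 * π) • circleAverage F c r := by
  rw [circleAverage_eq_integral_add (-π), smul_inv_smul₀ two_pi_pos.ne',
    intervalIntegral.integral_comp_add_right (fun θ ↦ F (circleMap c r θ)),
    intervalIntegral.integral_of_le (by linarith [pi_pos]), integral_Ioc_eq_integral_Ioo,
    zero_add, show 2 * π + -π = π by ring]

theorem integrableOn_Ioo_prod_circleMap (hF : IntegrableOn F (ball 0 R)) :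
    IntegrableOn (fun p : ℝ × ℝ ↦ p.1 • F (circleMap 0 p.1 p.2)) (Ioo 0 R ×ˢ Ioo (-π) π) := by
  refine ((integrableOn_comp_polarCoord_symm (hF.integrable_indicator measurableSet_ball)).mono_set
    (prod_mono Ioo_subset_Ioi_self subset_rfl)).congr_fun (fun p hp ↦ ?_)
    (measurableSet_Ioo.prod measurableSet_Ioo)
  simp only [polarCoord_symm_eq_circleMap]
  rw [indicator_of_mem ((circleMap_zero_mem_ball_zero_iff hp.1.1.le).mpr hp.1.2)]

theorem setIntegral_ball_eq_integral_circleAverage (hF : IntegrableOn F (ball 0 R)) :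
    ∫ z in ball 0 R, F z = ∫ r in Ioo 0 R, (2 * π * r) • circleAverage F 0 r := by
  calc ∫ z in ball 0 R, F z
      = ∫ p in polarCoord.target, p.1 • (ball 0 R).indicator F (Complex.polarCoord.symm p) := by
        rw [Complex.integral_comp_polarCoord_symm, integral_indicator measurableSet_ball]
    _ = ∫ p in Ioo 0 R ×ˢ Ioo (-π) π, p.1 • F (circleMap 0 p.1 p.2) := by
        rw [setIntegral_eq_of_subset_of_forall_sdiff_eq_zero polarCoord.open_target.measurableSet
          (prod_mono Ioo_subset_Ioi_self subset_rfl) fun p hp ↦ ?_]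
        · refine setIntegral_congr_fun (measurableSet_Ioo.prod measurableSet_Ioo) fun p hp ↦ ?_
          rw [polarCoord_symm_eq_circleMap,
            indicator_of_mem ((circleMap_zero_mem_ball_zero_iff hp.1.1.le).mpr hp.1.2)]
        · obtain ⟨⟨hr : 0 < p.1, hθ⟩, hp'⟩ := hp
          have hRr : ¬p.1 < R := fun h ↦ hp' ⟨⟨hr, h⟩, hθ⟩
          rw [polarCoord_symm_eq_circleMap, indicator_of_notMem
            (mt (circleMap_zero_mem_ball_zero_iff hr.le).mp hRr), smul_zero]
    _ = ∫ r in Ioo 0 R, ∫ θ in Ioo (-π) π, r • F (circleMap 0 r θ) :=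
        setIntegral_prod _ (integrableOn_Ioo_prod_circleMap hF)
    _ = ∫ r in Ioo 0 R, (2 * π * r) • circleAverage F 0 r := by
        refine setIntegral_congr_fun measurableSet_Ioo fun r _ ↦ ?_
        rw [integral_smul, integral_Ioo_neg_pi_pi_circleMap, smul_smul, mul_comm r]

theorem integrableOn_Ioo_smul_circleAverage (hF : IntegrableOn F (ball 0 R)) :
    IntegrableOn (fun r ↦ (2 * π * r) • circleAverage F 0 r) (Ioo 0 R) := by
  have hprod := integrableOn_Ioo_prod_circleMap hF
  rw [IntegrableOn, Measure.volume_eq_prod, ← Measure.prod_restrict] at hprod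
  refine hprod.integral_prod_left.congr (ae_of_all _ fun r ↦ ?_)
  dsimp only
  rw [integral_smul, integral_Ioo_neg_pi_pi_circleMap, smul_smul, mul_comm r]

end Polar

theorem integral_Ioo_zero_pow {R : ℝ} (hR : 0 ≤ R) (n : ℕ) :
    ∫ r in Ioo 0 R, r ^ n = R ^ (n + 1) / (n + 1) := by
  rw [← integral_Ioc_eq_integral_Ioo, ← intervalIntegral.integral_of_le hR, integral_pow]
  simp

theorem integral_Ioo_two_pi_mul_mul_add_sq_mul {R : ℝ} (hR : 0 ≤ R) (A B : ℝ) :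
    ∫ r in Ioo 0 R, (2 * π * r) * (A + r ^ 2 * B) = π * R ^ 2 * A + π * R ^ 4 / 2 * B := by
  have hpow : ∀ n : ℕ, IntegrableOn (fun r : ℝ ↦ r ^ n) (Ioo 0 R) := fun n ↦
    (continuous_pow n).integrableOn_Icc.mono_set Ioo_subset_Icc_self
  calc ∫ r in Ioo 0 R, (2 * π * r) * (A + r ^ 2 * B)
      = ∫ r in Ioo 0 R, ((2 * π * A) * r ^ 1 + (2 * π * B) * r ^ 3) := by
        congr 1
        ext r
        ring
    _ = π * R ^ 2 * A + π * R ^ 4 / 2 * B := by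
        rw [integral_add ((hpow 1).const_mul _) ((hpow 3).const_mul _), integral_const_mul,
          integral_const_mul, integral_Ioo_zero_pow hR, integral_Ioo_zero_pow hR]
        push_cast
        ring

section Disk

variable {ω : ℂ → ℂ} {R : ℝ}

theorem integrableOn_conj_div_norm_mul_sq (hω : DifferentiableOn ℂ ω (ball 0 R))
    (hω2 : IntegrableOn (fun z ↦ ‖ω z‖ ^ 2) (ball 0 R)) :
    IntegrableOn (fun z ↦ conj z / (‖z‖ : ℂ) * ω z ^ 2) (ball 0 R) := by
  refine hω2.mono' ?_ (ae_of_all _ fun z ↦ ?_)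
  · exact (by fun_prop : Measurable fun z : ℂ ↦ conj z / (‖z‖ : ℂ)).aestronglyMeasurable.mul
      ((hω.continuousOn.aestronglyMeasurable measurableSet_ball).pow 2)
  · rw [norm_mul, norm_pow, norm_div, norm_conj, norm_real, norm_norm]
    exact mul_le_of_le_one_left (by positivity) (div_self_le_one _)

theorem circleAverage_conj_div_norm_mul_sq (hω : DifferentiableOn ℂ ω (ball 0 R)) {r : ℝ}
    (hr : 0 < r) (hrR : r < R) :
    circleAverage (fun z ↦ conj z / (‖z‖ : ℂ) * ω z ^ 2) 0 r
      = r * (2 * (ω 0 * deriv ω 0)) := by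
  have hderiv : deriv (fun z ↦ ω z ^ 2) 0 = 2 * (ω 0 * deriv ω 0) := by
    rw [deriv_fun_pow (hω.differentiableAt (ball_mem_nhds 0 (hr.trans hrR)))]
    ring
  calc circleAverage (fun z ↦ conj z / (‖z‖ : ℂ) * ω z ^ 2) 0 r
      = circleAverage (fun z ↦ (r : ℂ)⁻¹ • (conj (z - 0) * ω z ^ 2)) 0 r := by
        refine circleAverage_congr_sphere fun z hz ↦ ?_
        rw [abs_of_pos hr, mem_sphere_zero_iff_norm] at hz
        simp only [hz, sub_zero, smul_eq_mul]
        ring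
    _ = r * (2 * (ω 0 * deriv ω 0)) := by
        rw [circleAverage_fun_smul, circleAverage_conj_sub_mul_eq_deriv isOpen_ball
          (hω.fun_pow 2) (closedBall_subset_ball hrR) hr, hderiv, smul_eq_mul]
        field_simp

theorem setIntegral_ball_conj_div_norm_mul_sq (hω : DifferentiableOn ℂ ω (ball 0 R))
    (hω2 : IntegrableOn (fun z ↦ ‖ω z‖ ^ 2) (ball 0 R)) (hR : 0 < R) :
    ∫ z in ball 0 R, conj z / (‖z‖ : ℂ) * ω z ^ 2
      = (4 * π * R ^ 3 / 3 : ℝ) * (ω 0 * deriv ω 0) := by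
  have hradial : ∀ r ∈ Ioo 0 R,
      (2 * π * r) • circleAverage (fun z ↦ conj z / (‖z‖ : ℂ) * ω z ^ 2) 0 r
        = (2 * π * r ^ 2) • (2 * (ω 0 * deriv ω 0)) := fun r ⟨hr, hrR⟩ ↦ by
    rw [circleAverage_conj_div_norm_mul_sq hω hr hrR, real_smul, real_smul]
    push_cast
    ring
  rw [setIntegral_ball_eq_integral_circleAverage (integrableOn_conj_div_norm_mul_sq hω hω2),
    setIntegral_congr_fun measurableSet_Ioo hradial, integral_smul_const, integral_const_mul,
    integral_Ioo_zero_pow hR.le, real_smul]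
  push_cast
  ring

theorem pi_mul_sq_norm_add_le_setIntegral_ball_sq_norm (hω : DifferentiableOn ℂ ω (ball 0 R))
    (hω2 : IntegrableOn (fun z ↦ ‖ω z‖ ^ 2) (ball 0 R)) (hR : 0 < R) :
    π * R ^ 2 * ‖ω 0‖ ^ 2 + π * R ^ 4 / 2 * ‖deriv ω 0‖ ^ 2 ≤ ∫ z in ball 0 R, ‖ω z‖ ^ 2 := by
  rw [setIntegral_ball_eq_integral_circleAverage hω2,
    ← integral_Ioo_two_pi_mul_mul_add_sq_mul hR.le]
  have hcont : Continuous fun r : ℝ ↦ (2 * π * r) * (‖ω 0‖ ^ 2 + r ^ 2 * ‖deriv ω 0‖ ^ 2) := by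
    fun_prop
  refine setIntegral_mono_on (hcont.integrableOn_Icc.mono_set Ioo_subset_Icc_self)
    (integrableOn_Ioo_smul_circleAverage hω2) measurableSet_Ioo fun r ⟨hr, hrR⟩ ↦ ?_
  rw [smul_eq_mul]
  exact mul_le_mul_of_nonneg_left (sq_norm_add_sq_mul_sq_norm_deriv_le_circleAverage
    isOpen_ball hω (closedBall_subset_ball hrR) hr) (by positivity)

end Disk

theorem setIntegral_ball_sq_norm_affine {R : ℝ} (hR : 0 ≤ R) (a b : ℂ) :
    ∫ z in ball 0 R, ‖a + b * z‖ ^ 2 = π * R ^ 2 * ‖a‖ ^ 2 + π * R ^ 4 / 2 * ‖b‖ ^ 2 := by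
  have hcont : Continuous fun z : ℂ ↦ ‖a + b * z‖ ^ 2 := by fun_prop
  rw [setIntegral_ball_eq_integral_circleAverage ((hcont.continuousOn.integrableOn_compact
      (isCompact_closedBall 0 R)).mono_set ball_subset_closedBall),
    ← integral_Ioo_two_pi_mul_mul_add_sq_mul hR]
  refine setIntegral_congr_fun measurableSet_Ioo fun r ⟨hr, _⟩ ↦ ?_
  simpa using congrArg (2 * π * r * ·) (circleAverage_sq_norm_affine (c := 0) hr a b)

theorem four_pi_div_three_mul_le_of_pi_mul_sq_add_le_one {x y : ℝ}
    (h : π * x ^ 2 + π / 2 * y ^ 2 ≤ 1) : 4 * π / 3 * (x * y) ≤ 2 * √2 / 3 := by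
  have hs : √2 ^ 2 = 2 := sq_sqrt zero_le_two
  have hamgm : 2 * √2 * (π * (x * y)) ≤ 2 := by
    have := mul_nonneg pi_pos.le (sq_nonneg (√2 * x - y))
    linear_combination this + 2 * h + π * x ^ 2 * hs
  linear_combination (√2 / 3) * hamgm - (2 / 3) * π * (x * y) * hs

/-- Equality (23) of the paper: the supremum of `|∫_𝔻 (z̄/|z|) ω(z)² dA(z)|`, over all
holomorphic `ω` on the unit disk with `∫_𝔻 |ω|² dA = 1`, equals `2√2/3`. (The integrand
`z̄/|z| = |z|/z` for `z ≠ 0` is `0` at `z = 0`, which holds automatically in Lean.) -/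
theorem sup_beltrami_pairing_eq :
    IsLUB {r : ℝ | ∃ ω : ℂ → ℂ, DifferentiableOn ℂ ω (ball (0 : ℂ) 1) ∧
        (∫ z in ball (0 : ℂ) 1, ‖ω z‖ ^ 2) = 1 ∧
        r = ‖∫ z in ball (0 : ℂ) 1,
              ((starRingEnd ℂ) z / (‖z‖ : ℂ)) * ω z ^ 2‖}
      (2 * Real.sqrt 2 / 3) := by
  refine ⟨?_, fun c hc ↦ hc ?_⟩
  · rintro _ ⟨ω, hω, hnorm, rfl⟩
    have hω2 : IntegrableOn (fun z ↦ ‖ω z‖ ^ 2) (ball 0 1) :=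
      Integrable.of_integral_ne_zero (by rw [hnorm]; exact one_ne_zero)
    have hbound := pi_mul_sq_norm_add_le_setIntegral_ball_sq_norm hω hω2 one_pos
    rw [hnorm] at hbound
    rw [setIntegral_ball_conj_div_norm_mul_sq hω hω2 one_pos, norm_mul, norm_mul, norm_real,
      Real.norm_of_nonneg (by positivity)]
    simpa using four_pi_div_three_mul_le_of_pi_mul_sq_add_le_one (by simpa using hbound)
  · have hnorm : ∫ z in ball (0 : ℂ) 1, ‖((√(2 * π))⁻¹ : ℝ) + ((√π)⁻¹ : ℝ) * z‖ ^ 2 = 1 := by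
      rw [setIntegral_ball_sq_norm_affine zero_le_one]
      simp only [norm_real, norm_inv, Real.norm_eq_abs, inv_pow, sq_abs, sq_sqrt pi_pos.le,
        sq_sqrt two_pi_pos.le]
      field_simp
      ring
    refine ⟨_, by fun_prop, hnorm, ?_⟩
    rw [setIntegral_ball_conj_div_norm_mul_sq (by fun_prop)
      (Integrable.of_integral_ne_zero (by rw [hnorm]; exact one_ne_zero)) one_pos]
    simp [abs_of_pos pi_pos, abs_of_nonneg (sqrt_nonneg π), abs_of_nonneg (sqrt_nonneg 2)]
    field_simp
    rw [sq_sqrt zero_le_two, sq_sqrt pi_pos.le]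
    ring
end

section
/- Let a₀, a₁ ∈ ℂ with |a₀|² = 1/(2π) and |a₁|² = 1/π, and set ω(z) = a₀ + a₁ z. Then ∫_𝔻 |ω(z)|² dA(z) = 1 and |∫_𝔻 ( \overline{z}/|z| ) · ω(z)² dA(z)| = 2√2/3; that is, ω attains the supremum of |∫_𝔻 (\overline{z}/|z|) ω(z)² dA(z)| over all holomorphic ω on 𝔻 with L²-norm 1. -/
/-!
In polar coordinates `z = r e^{iθ}` both integrands, multiplied by the Jacobian `r`, are
trigonometric polynomials `b₁(r) e^{-iθ} + b₀(r) + b₂(r) e^{iθ}`, and integrating over `θ` kills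
everything except `2π b₀(r)`. For `|a₀ + a₁ z|²` this leaves `2π (|a₀|² r + |a₁|² r³)`, giving
`π (|a₀|² + |a₁|²/2) = 1`; for `(z̄/|z|)(a₀ + a₁ z)²` it leaves `4π a₀ a₁ r²`, giving
`(4π/3) a₀ a₁`, whose modulus is `(4π/3) · 1/(π√2) = 2√2/3`.
-/

open Metric MeasureTheory Set Complex
open scoped Real ComplexConjugate

theorem integral_exp_int_mul_mul_I_eq_zero {n : ℤ} (hn : n ≠ 0) :
    ∫ θ in (-π)..π, exp (n * θ * I) = 0 := by
  have hc : (n : ℂ) * I ≠ 0 := mul_ne_zero (Int.cast_ne_zero.2 hn) I_ne_zero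
  have hperiod : exp (n * I * π) = exp (n * I * ↑(-π)) := by
    rw [← mul_one (exp (n * I * ↑(-π))), ← exp_int_mul_two_pi_mul_I n, ← Complex.exp_add,
      ofReal_neg]
    ring_nf
  simp_rw [mul_right_comm _ _ I]
  rw [integral_exp_mul_complex hc, hperiod, sub_self, zero_div]

theorem setIntegral_Ioo_neg_pi_pi_trig_deg_one (c₁ c₀ c₂ : ℂ) :
    ∫ θ in Ioo (-π) π, (c₁ * exp (-(θ * I)) + c₀ + c₂ * exp (θ * I)) = 2 * π * c₀ := by
  have hneg := integral_exp_int_mul_mul_I_eq_zero (n := -1) (by norm_num)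
  have hpos := integral_exp_int_mul_mul_I_eq_zero (n := 1) (by norm_num)
  push_cast at hneg hpos
  simp only [neg_one_mul, one_mul] at hneg hpos
  rw [← integral_Ioc_eq_integral_Ioo,
    ← intervalIntegral.integral_of_le (neg_le_self Real.pi_pos.le)]
  have i₁ : IntervalIntegrable (fun θ : ℝ => c₁ * exp (-(θ * I))) volume (-π) π := by
    apply Continuous.intervalIntegrable; fun_prop
  have i₂ : IntervalIntegrable (fun θ : ℝ => c₂ * exp (θ * I)) volume (-π) π := by
    apply Continuous.intervalIntegrable; fun_prop
  rw [intervalIntegral.integral_add (i₁.add intervalIntegrable_const) i₂,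
    intervalIntegral.integral_add i₁ intervalIntegrable_const,
    intervalIntegral.integral_const_mul, intervalIntegral.integral_const_mul]
  simp only [neg_mul] at hneg
  rw [hneg, hpos, intervalIntegral.integral_const, real_smul]
  push_cast; ring

theorem setIntegral_ball_zero_eq_polar {E : Type*} [NormedAddCommGroup E] [NormedSpace ℝ E]
    (f : ℂ → E) (R : ℝ) :
    ∫ z in ball (0 : ℂ) R, f z =
      ∫ p in Ioo 0 R ×ˢ Ioo (-π) π, p.1 • f (Complex.polarCoord.symm p) := by
  have htarget : polarCoord.target ∩ {p : ℝ × ℝ | |p.1| < R} = Ioo 0 R ×ˢ Ioo (-π) π := by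
    ext ⟨r, θ⟩
    simp only [polarCoord_target, mem_inter_iff, mem_prod, mem_Ioi, mem_Ioo, mem_ofPred_eq]
    constructor
    · rintro ⟨⟨hr, hθ⟩, hR⟩; exact ⟨⟨hr, (abs_lt.1 hR).2⟩, hθ⟩
    · rintro ⟨⟨hr, hR⟩, hθ⟩; exact ⟨⟨hr, hθ⟩, by rwa [abs_of_pos hr]⟩
  have hmeas : MeasurableSet {p : ℝ × ℝ | |p.1| < R} :=
    measurableSet_lt (by fun_prop) measurable_const
  rw [← integral_indicator measurableSet_ball, ← Complex.integral_comp_polarCoord_symm,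
    ← htarget, ← setIntegral_indicator hmeas]
  refine setIntegral_congr_fun polarCoord.open_target.measurableSet fun p _ => ?_
  by_cases hp : |p.1| < R <;> simp [hp]

theorem setIntegral_Ioo_prod_Ioo_of_continuous {E : Type*} [NormedAddCommGroup E]
    [NormedSpace ℝ E] {G : ℝ × ℝ → E} (hG : Continuous G) (a b c d : ℝ) :
    ∫ p in Ioo a b ×ˢ Ioo c d, G p = ∫ x in Ioo a b, ∫ y in Ioo c d, G (x, y) := by
  have hint : IntegrableOn G (Ioo a b ×ˢ Ioo c d) (volume.prod volume) :=
    (hG.continuousOn.integrableOn_compact (isCompact_Icc.prod isCompact_Icc)).mono_set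
      (prod_mono Ioo_subset_Icc_self Ioo_subset_Icc_self)
  rw [Measure.volume_eq_prod]
  exact setIntegral_prod G hint

theorem polarCoord_symm_eq_mul_exp (p : ℝ × ℝ) :
    Complex.polarCoord.symm p = p.1 * exp (p.2 * I) := by
  rw [Complex.polarCoord_symm_apply, exp_mul_I, ← ofReal_cos, ← ofReal_sin]

theorem setIntegral_ball_zero_of_polar_trig_deg_one {f : ℂ → ℂ} {R : ℝ} (hR : 0 ≤ R)
    {b₁ b₀ b₂ : ℝ → ℂ} (hb₁ : Continuous b₁) (hb₀ : Continuous b₀) (hb₂ : Continuous b₂)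
    (hf : ∀ r ∈ Ioo 0 R, ∀ θ : ℝ,
      r * f (r * exp (θ * I)) = b₁ r * exp (-(θ * I)) + b₀ r + b₂ r * exp (θ * I)) :
    ∫ z in ball (0 : ℂ) R, f z = 2 * π * ∫ r in (0)..R, b₀ r := by
  calc ∫ z in ball (0 : ℂ) R, f z
      = ∫ p in Ioo 0 R ×ˢ Ioo (-π) π,
          (b₁ p.1 * exp (-(p.2 * I)) + b₀ p.1 + b₂ p.1 * exp (p.2 * I)) := by
        rw [setIntegral_ball_zero_eq_polar]
        refine setIntegral_congr_fun (measurableSet_Ioo.prod measurableSet_Ioo) fun p hp => ?_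
        rw [polarCoord_symm_eq_mul_exp, real_smul, hf p.1 hp.1 p.2]
    _ = ∫ r in Ioo 0 R, ∫ θ in Ioo (-π) π,
          (b₁ r * exp (-(θ * I)) + b₀ r + b₂ r * exp (θ * I)) :=
        setIntegral_Ioo_prod_Ioo_of_continuous (by fun_prop) _ _ _ _
    _ = ∫ r in Ioo 0 R, 2 * π * b₀ r :=
        setIntegral_congr_fun measurableSet_Ioo fun r _ =>
          setIntegral_Ioo_neg_pi_pi_trig_deg_one _ _ _
    _ = 2 * π * ∫ r in (0)..R, b₀ r := by
        rw [intervalIntegral.integral_of_le hR, integral_Ioc_eq_integral_Ioo, integral_const_mul]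

theorem setIntegral_unitBall_norm_sq_linear (a₀ a₁ : ℂ) :
    ∫ z in ball (0 : ℂ) 1, ‖a₀ + a₁ * z‖ ^ 2 = π * (‖a₀‖ ^ 2 + ‖a₁‖ ^ 2 / 2) := by
  apply ofReal_injective
  rw [← integral_complex_ofReal]
  have key := setIntegral_ball_zero_of_polar_trig_deg_one
    (f := fun z => ((‖a₀ + a₁ * z‖ ^ 2 : ℝ) : ℂ)) zero_le_one
    (b₁ := fun r => a₀ * conj a₁ * (r : ℂ) ^ 2)
    (b₀ := fun r => ((‖a₀‖ ^ 2 * r + ‖a₁‖ ^ 2 * r ^ 3 : ℝ) : ℂ))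
    (b₂ := fun r => a₁ * conj a₀ * (r : ℂ) ^ 2) (by fun_prop) (by fun_prop) (by fun_prop)
    (fun r _ θ => by
      have hu : exp (θ * I) * exp (-(θ * I)) = 1 := by rw [← Complex.exp_add]; simp
      have hconj : conj (exp (θ * I)) = exp (-(θ * I)) := by
        rw [← Complex.exp_conj]; simp [conj_ofReal]
      simp only [Complex.sq_norm]
      push_cast
      simp only [← Complex.mul_conj, map_add, map_mul, conj_ofReal, hconj]
      linear_combination (a₁ * conj a₁ * (r : ℂ) ^ 3) * hu)
  have hradial : ∫ r in (0 : ℝ)..1, (‖a₀‖ ^ 2 * r + ‖a₁‖ ^ 2 * r ^ 3)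
      = ‖a₀‖ ^ 2 / 2 + ‖a₁‖ ^ 2 / 4 := by
    rw [intervalIntegral.integral_add (by apply Continuous.intervalIntegrable; fun_prop)
      (by apply Continuous.intervalIntegrable; fun_prop), intervalIntegral.integral_const_mul,
      intervalIntegral.integral_const_mul, integral_id, integral_pow]
    ring
  rw [key, intervalIntegral.integral_ofReal, hradial]
  push_cast
  ring

theorem setIntegral_unitBall_conj_div_norm_mul_linear_sq (a₀ a₁ : ℂ) :
    ∫ z in ball (0 : ℂ) 1, conj z / ((‖z‖ : ℝ) : ℂ) * (a₀ + a₁ * z) ^ 2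
      = 4 * π / 3 * (a₀ * a₁) := by
  have key := setIntegral_ball_zero_of_polar_trig_deg_one
    (f := fun z => conj z / ((‖z‖ : ℝ) : ℂ) * (a₀ + a₁ * z) ^ 2) zero_le_one
    (b₁ := fun r => a₀ ^ 2 * r) (b₀ := fun r => 2 * a₀ * a₁ * ((r ^ 2 : ℝ) : ℂ))
    (b₂ := fun r => a₁ ^ 2 * (r : ℂ) ^ 3) (by fun_prop) (by fun_prop) (by fun_prop)
    (fun r hr θ => by
      have hr0 : (r : ℂ) ≠ 0 := ofReal_ne_zero.2 hr.1.ne'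
      have hu : exp (θ * I) * exp (-(θ * I)) = 1 := by rw [← Complex.exp_add]; simp
      have hconj : conj (exp (θ * I)) = exp (-(θ * I)) := by
        rw [← Complex.exp_conj]; simp [conj_ofReal]
      have hnorm : ‖(r : ℂ) * exp (θ * I)‖ = r := by
        rw [norm_mul, norm_exp_ofReal_mul_I, mul_one, norm_real, Real.norm_of_nonneg hr.1.le]
      simp only [hnorm, map_mul, conj_ofReal, hconj]
      rw [mul_div_cancel_left₀ _ hr0]
      push_cast
      linear_combination (r : ℂ) ^ 2 * (2 * a₀ * a₁ + a₁ ^ 2 * r * exp (θ * I)) * hu)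
  rw [key, intervalIntegral.integral_const_mul, intervalIntegral.integral_ofReal, integral_pow]
  push_cast
  ring

/-- The extremal functions for the pairing with the Beltrami coefficient `μ₃*(z) = |z|/z`:
if `|a₀|² = 1/(2π)` and `|a₁|² = 1/π`, then `ω(z) = a₀ + a₁ z` has `L²`-norm `1` on the
unit disk and attains the supremum value `|∫_𝔻 (z̄/|z|) ω(z)² dA(z)| = 2√2/3`. -/
theorem extremal_linear_function (a₀ a₁ : ℂ)
    (h₀ : ‖a₀‖ ^ 2 = 1 / (2 * Real.pi))
    (h₁ : ‖a₁‖ ^ 2 = 1 / Real.pi) :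
    (∫ z in ball (0 : ℂ) 1, ‖a₀ + a₁ * z‖ ^ 2) = 1 ∧
      ‖∫ z in ball (0 : ℂ) 1,
          ((starRingEnd ℂ) z / ((‖z‖ : ℝ) : ℂ)) * (a₀ + a₁ * z) ^ 2‖ =
        2 * Real.sqrt 2 / 3 := by
  have hπ : π ≠ 0 := Real.pi_ne_zero
  refine ⟨?_, ?_⟩
  · rw [setIntegral_unitBall_norm_sq_linear, h₀, h₁]
    field_simp
    ring
  · rw [setIntegral_unitBall_conj_div_norm_mul_linear_sq, norm_mul, norm_mul,
      ← sq_eq_sq₀ (by positivity) (by positivity), mul_pow, mul_pow, h₀, h₁, div_pow,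
      mul_pow, Real.sq_sqrt zero_le_two]
    have hcoeff : ‖(4 * π / 3 : ℂ)‖ = 4 * π / 3 := by
      rw [show (4 * π / 3 : ℂ) = ((4 * π / 3 : ℝ) : ℂ) by push_cast; ring, norm_real,
        Real.norm_of_nonneg (by positivity)]
    rw [hcoeff]
    field_simp
    ring
end
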